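/- arXiv:1402.0243 — 2 statements merged into one kernel-verified Lean document; each statement's English description precedes it below -/
import Mathlib

section
/- Let ρ₁, ρ₂, v₁, v₂ be strictly positive real numbers with (ρ₁/ρ₂)·(v₂/v₁) > 1. Define V(R) = (ρ₁ + ρ₂·R)·(v₁ + v₂/R) for R > 0, R* = √((ρ₁·v₂)/(ρ₂·v₁)), and γ* = V(R*)/V(1). Then max(ρ₂/(ρ₁+ρ₂), v₁/(v₁+v₂)) ≤ γ* ≤ 4·max(ρ₂/(ρ₁+ρ₂), v₁/(v₁+v₂)). -/
/-!
With `a = ρ₁v₁`, `b = ρ₂v₂`, `c = ρ₂v₁`, `d = ρ₁v₂` one has `V(R) = a + b + cR + d/R`. At the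
optimum `cR*² = d` the last two terms agree, so `V(R*) = a + b + 2√(ab) ≤ 2(a + b)`, and `a + b`
is at most twice the larger of `ρ₂(v₁ + v₂)` and `(ρ₁ + ρ₂)v₁`, i.e. of `V(1)` times the larger
ratio. Conversely, the hypothesis says exactly `R* > 1`, and for every `R ≥ 1` both
`V(R) ≥ ρ₂R(v₁ + v₂/R) ≥ ρ₂(v₁ + v₂)` and `V(R) ≥ (ρ₁ + ρ₂R)v₁ ≥ (ρ₁ + ρ₂)v₁`.
-/

noncomputable def costVariance (ρ₁ ρ₂ v₁ v₂ R : ℝ) : ℝ := (ρ₁ + ρ₂ * R) * (v₁ + v₂ / R)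

section CostVariance

variable {ρ₁ ρ₂ v₁ v₂ R : ℝ}

theorem costVariance_one : costVariance ρ₁ ρ₂ v₁ v₂ 1 = (ρ₁ + ρ₂) * (v₁ + v₂) := by
  simp [costVariance]

theorem max_le_costVariance_of_one_le (hρ₁ : 0 ≤ ρ₁) (hρ₂ : 0 ≤ ρ₂) (hv₁ : 0 ≤ v₁)
    (hv₂ : 0 ≤ v₂) (hR : 1 ≤ R) :
    max (ρ₂ * (v₁ + v₂)) ((ρ₁ + ρ₂) * v₁) ≤ costVariance ρ₁ ρ₂ v₁ v₂ R := by
  have hR₀ : 0 < R := one_pos.trans_le hR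
  refine max_le ?_ ?_
  · calc ρ₂ * (v₁ + v₂) ≤ ρ₂ * (R * v₁ + v₂) := by gcongr; nlinarith
      _ = ρ₂ * R * (v₁ + v₂ / R) := by field_simp
      _ ≤ costVariance ρ₁ ρ₂ v₁ v₂ R := by unfold costVariance; gcongr; linarith
  · calc (ρ₁ + ρ₂) * v₁ ≤ (ρ₁ + ρ₂ * R) * v₁ := by gcongr; nlinarith
      _ ≤ costVariance ρ₁ ρ₂ v₁ v₂ R := by
        unfold costVariance; gcongr; linarith [div_nonneg hv₂ hR₀.le]

theorem costVariance_eq_of_sq_eq (hR : 0 < R) (hstat : ρ₂ * v₁ * R ^ 2 = ρ₁ * v₂) :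
    costVariance ρ₁ ρ₂ v₁ v₂ R = ρ₁ * v₁ + ρ₂ * v₂ + 2 * (ρ₂ * v₁ * R) := by
  unfold costVariance
  field_simp
  linear_combination -hstat

theorem costVariance_le_of_sq_eq (hρ₁ : 0 ≤ ρ₁) (hρ₂ : 0 ≤ ρ₂) (hv₁ : 0 ≤ v₁) (hv₂ : 0 ≤ v₂)
    (hR : 0 < R) (hstat : ρ₂ * v₁ * R ^ 2 = ρ₁ * v₂) :
    costVariance ρ₁ ρ₂ v₁ v₂ R ≤ 2 * (ρ₁ * v₁ + ρ₂ * v₂) := by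
  have hamgm : 2 * (ρ₂ * v₁ * R) ≤ ρ₁ * v₁ + ρ₂ * v₂ := by
    rw [← pow_le_pow_iff_left₀ (by positivity) (by positivity) two_ne_zero]
    -- `(2cR)² = 4cd = 4ab`
    linear_combination 4 * (ρ₂ * v₁) * hstat + sq_nonneg (ρ₁ * v₁ - ρ₂ * v₂)
  rw [costVariance_eq_of_sq_eq hR hstat]
  linarith

end CostVariance

theorem mul_sq_sqrt_div_self {c d : ℝ} (hc : 0 < c) (hd : 0 ≤ d) :
    c * Real.sqrt (d / c) ^ 2 = d := by
  rw [Real.sq_sqrt (by positivity)]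
  field_simp

theorem max_div_add_mul_eq (ρ₁ ρ₂ v₁ v₂ : ℝ) (hρ : 0 < ρ₁ + ρ₂) (hv : 0 < v₁ + v₂) :
    max (ρ₂ / (ρ₁ + ρ₂)) (v₁ / (v₁ + v₂)) * ((ρ₁ + ρ₂) * (v₁ + v₂)) =
      max (ρ₂ * (v₁ + v₂)) ((ρ₁ + ρ₂) * v₁) := by
  rw [max_mul_of_nonneg _ _ (by positivity)]
  congr 1 <;> field_simp

/-- **Proposition 3, two-sided bounds on the gain** `γ* = V(R*)/V(1)`. -/
theorem prop3_gain_bounds (ρ₁ ρ₂ v₁ v₂ : ℝ)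
    (hρ₁ : 0 < ρ₁) (hρ₂ : 0 < ρ₂) (hv₁ : 0 < v₁) (hv₂ : 0 < v₂)
    (hcond : 1 < ρ₁ / ρ₂ * (v₂ / v₁))
    (V : ℝ → ℝ) (hV : ∀ R : ℝ, 0 < R → V R = (ρ₁ + ρ₂ * R) * (v₁ + v₂ / R))
    (Rstar γstar : ℝ) (hRstar : Rstar = Real.sqrt (ρ₁ * v₂ / (ρ₂ * v₁)))
    (hγ : γstar = V Rstar / V 1) :
    max (ρ₂ / (ρ₁ + ρ₂)) (v₁ / (v₁ + v₂)) ≤ γstar ∧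
    γstar ≤ 4 * max (ρ₂ / (ρ₁ + ρ₂)) (v₁ / (v₁ + v₂)) := by
  have hRstar_one : 1 ≤ Rstar := by
    rw [hRstar, Real.one_le_sqrt, ← div_mul_div_comm]
    exact hcond.le
  have hRstar_pos : 0 < Rstar := one_pos.trans_le hRstar_one
  have hstat : ρ₂ * v₁ * Rstar ^ 2 = ρ₁ * v₂ :=
    hRstar ▸ mul_sq_sqrt_div_self (by positivity) (by positivity)
  have hV1 : V 1 = (ρ₁ + ρ₂) * (v₁ + v₂) := (hV 1 one_pos).trans costVariance_one
  have hV1_pos : 0 < V 1 := hV1 ▸ by positivity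
  have hVRstar : V Rstar = costVariance ρ₁ ρ₂ v₁ v₂ Rstar := hV Rstar hRstar_pos
  rw [hγ, hVRstar, le_div_iff₀ hV1_pos, div_le_iff₀ hV1_pos, mul_assoc, hV1,
    max_div_add_mul_eq ρ₁ ρ₂ v₁ v₂ (by positivity) (by positivity)]
  refine ⟨max_le_costVariance_of_one_le hρ₁.le hρ₂.le hv₁.le hv₂.le hRstar_one, ?_⟩
  calc costVariance ρ₁ ρ₂ v₁ v₂ Rstar ≤ 2 * (ρ₁ * v₁ + ρ₂ * v₂) :=
        costVariance_le_of_sq_eq hρ₁.le hρ₂.le hv₁.le hv₂.le hRstar_pos hstat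
    _ ≤ 4 * max (ρ₂ * (v₁ + v₂)) ((ρ₁ + ρ₂) * v₁) := by
        linarith [mul_pos hρ₂ hv₁, mul_pos hρ₂ hv₂,
          le_max_left (ρ₂ * (v₁ + v₂)) ((ρ₁ + ρ₂) * v₁),
          le_max_right (ρ₂ * (v₁ + v₂)) ((ρ₁ + ρ₂) * v₁)]
end

section
/- Let ρ₁, ρ₂, v₁, v₂ be strictly positive real numbers. Define V(R) = (ρ₁ + ρ₂·R)·(v₁ + v₂/R) for R > 0 and R* = √((ρ₁·v₂)/(ρ₂·v₁)), and suppose R* > 1. Then for every real r > 0 with R* − r ≥ 1, one has V(R* + r) < V(R* − r). -/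
/-! Expanding the product, `V R = ρ₁ v₁ + ρ₂ v₂ + a R + b / R` with `a = ρ₂ v₁`, `b = ρ₁ v₂`, and
`R* = √(b / a)` is the point where `a R = b / R`. With `a R*² = b`, the gap between the two sides
is `V (R* - r) - V (R* + r) = 2 a r³ / (R*² - r²)`, which is positive as soon as `0 < r < R*`. -/

lemma cost_mul_variance_eq (ρ₁ ρ₂ v₁ v₂ : ℝ) {R : ℝ} (hR : R ≠ 0) :
    (ρ₁ + ρ₂ * R) * (v₁ + v₂ / R) = ρ₁ * v₁ + ρ₂ * v₂ + (ρ₂ * v₁ * R + ρ₁ * v₂ / R) := by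
  field_simp
  ring

lemma mul_add_sq_div_sub_eq {a s r : ℝ} (hsr : s - r ≠ 0) (hsr' : s + r ≠ 0) :
    (a * (s - r) + a * s ^ 2 / (s - r)) - (a * (s + r) + a * s ^ 2 / (s + r)) =
      2 * a * r ^ 3 / ((s - r) * (s + r)) := by
  field_simp
  ring

lemma mul_add_div_add_lt_mul_add_div_sub {a b s r : ℝ} (ha : 0 < a) (hb : a * s ^ 2 = b)
    (hr : 0 < r) (hrs : r < s) :
    a * (s + r) + b / (s + r) < a * (s - r) + b / (s - r) := by
  have hsr : 0 < s - r := sub_pos.mpr hrs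
  have hsr' : 0 < s + r := by linarith
  have hgap := mul_add_sq_div_sub_eq (a := a) hsr.ne' hsr'.ne'
  subst hb
  have : 0 < 2 * a * r ^ 3 / ((s - r) * (s + r)) := by positivity
  linarith

theorem cor5_ii_general (ρ₁ ρ₂ v₁ v₂ : ℝ)
    (hρ₁ : 0 < ρ₁) (hρ₂ : 0 < ρ₂) (hv₁ : 0 < v₁) (hv₂ : 0 < v₂)
    (V : ℝ → ℝ) (hV : ∀ R : ℝ, 0 < R → V R = (ρ₁ + ρ₂ * R) * (v₁ + v₂ / R))
    (Rstar : ℝ) (hRstar : Rstar = Real.sqrt (ρ₁ * v₂ / (ρ₂ * v₁))) :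
    ∀ r : ℝ, 0 < r → 1 ≤ Rstar - r → V (Rstar + r) < V (Rstar - r) := by
  intro r hr hRstar_sub
  have hsub : 0 < Rstar - r := one_pos.trans_le hRstar_sub
  have hadd : 0 < Rstar + r := by linarith
  have hsq : ρ₂ * v₁ * Rstar ^ 2 = ρ₁ * v₂ := by
    rw [hRstar, Real.sq_sqrt (by positivity)]
    field_simp
  rw [hV _ hadd, hV _ hsub, cost_mul_variance_eq _ _ _ _ hadd.ne',
    cost_mul_variance_eq _ _ _ _ hsub.ne']
  gcongr ?_ + ?_
  exact mul_add_div_add_lt_mul_add_div_sub (mul_pos hρ₂ hv₁) hsq hr (by linarith)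

/-- **Corollary 5(ii).** If `R* > 1` and `r > 0` with `R* − r ≥ 1`, then
`V(R* + r) < V(R* − r)`. -/
theorem cor5_ii (ρ₁ ρ₂ v₁ v₂ : ℝ)
    (hρ₁ : 0 < ρ₁) (hρ₂ : 0 < ρ₂) (hv₁ : 0 < v₁) (hv₂ : 0 < v₂)
    (V : ℝ → ℝ) (hV : ∀ R : ℝ, 0 < R → V R = (ρ₁ + ρ₂ * R) * (v₁ + v₂ / R))
    (Rstar : ℝ) (hRstar : Rstar = Real.sqrt (ρ₁ * v₂ / (ρ₂ * v₁)))
    (hRstar1 : 1 < Rstar) :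
    ∀ r : ℝ, 0 < r → 1 ≤ Rstar - r → V (Rstar + r) < V (Rstar - r) :=
  cor5_ii_general ρ₁ ρ₂ v₁ v₂ hρ₁ hρ₂ hv₁ hv₂ V hV Rstar hRstar
end
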